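/- (Well-posedness of the meta algorithm.) Let ε > 0, α > 0, and let (h_t)_{t≥1} be a positive nondecreasing real sequence; for each t let k_t > 0 and z_t > k_t·h_t. Let (l_t)_{t≥1} be a real sequence with |l_t| ≤ h_t for all t. Define recursively S̃_0 = 0, Ṽ_0 = 0, and for t ≥ 1: ỹ_t = D_t(Ṽ_{t−1}, S̃_{t−1}) where D_t(V, S) = ε·erfi(S/√(4·α·(V + z_t + k_t·S))) − (ε·k_t·√α/(2·√(V + z_t + k_t·S)))·exp(S²/(4·α·(V + z_t + k_t·S))); y_t = max(ỹ_t, 0); l̃_t = l_t if l_t·ỹ_t ≥ l_t·y_t and l̃_t = 0 otherwise; S̃_t = S̃_{t−1} − l̃_t; Ṽ_t = Ṽ_{t−1} + l̃_t². Then for every t ≥ 1, ∑_{i=1}^t l̃_i ≤ h_t, i.e., S̃_t ≥ −h_t; in particular Ṽ_{t−1} + z_t + k_t·S̃_{t−1} > 0 for every t ≥ 1, so every D_t above is evaluated where it is well defined. -/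

import Mathlib

/-!
The potential's derivative `D(V, S)` is negative whenever `S ≤ 0` (and its argument is
positive), so at such a step the base prediction `ỹ` is negative, `y = 0`, and the surrogate
loss `l̃` survives only when `l ≤ 0`: it can push `S̃` down only while `S̃ > 0`, and then by at
most `h`. Hence `S̃_t ≥ -h_t` by induction, and since `z > k·h` and `Ṽ ≥ 0` this keeps
`Ṽ + z + k·S̃` positive.
-/

/-- The imaginary error function, `erfi x = ∫ u in 0..x, exp (u²)`
(the conventional erfi scaled by `√π / 2`). -/
noncomputable def erfi (x : ℝ) : ℝ := ∫ u in (0:ℝ)..x, Real.exp (u ^ 2)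

/-- `D(V, S)`, the partial derivative in `S` of the shifted potential
`Φ(V, S) = φ(V + z + k·S, S)`. -/
noncomputable def Dfun (ε α k z V S : ℝ) : ℝ :=
  ε * erfi (S / Real.sqrt (4 * α * (V + z + k * S))) -
    ε * k * Real.sqrt α / (2 * Real.sqrt (V + z + k * S)) *
      Real.exp (S ^ 2 / (4 * α * (V + z + k * S)))

lemma erfi_nonpos {x : ℝ} (hx : x ≤ 0) : erfi x ≤ 0 := by
  rw [erfi, intervalIntegral.integral_symm, neg_nonpos]
  exact intervalIntegral.integral_nonneg hx fun u _ => (Real.exp_pos _).le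

lemma Dfun_neg {ε α k z V S : ℝ} (hε : 0 < ε) (hα : 0 < α) (hk : 0 < k)
    (hx : 0 < V + z + k * S) (hS : S ≤ 0) : Dfun ε α k z V S < 0 := by
  have herfi : ε * erfi (S / Real.sqrt (4 * α * (V + z + k * S))) ≤ 0 :=
    mul_nonpos_of_nonneg_of_nonpos hε.le
      (erfi_nonpos (div_nonpos_of_nonpos_of_nonneg hS (Real.sqrt_nonneg _)))
  have : 0 < Real.sqrt α := Real.sqrt_pos.mpr hα
  have : 0 < Real.sqrt (V + z + k * S) := Real.sqrt_pos.mpr hx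
  have hexp : 0 < ε * k * Real.sqrt α / (2 * Real.sqrt (V + z + k * S)) *
      Real.exp (S ^ 2 / (4 * α * (V + z + k * S))) := by positivity
  rw [Dfun]
  linarith

noncomputable def surrogateLoss (l ŷ : ℝ) : ℝ := if l * ŷ ≥ l * max ŷ 0 then l else 0

lemma abs_surrogateLoss_le (l ŷ : ℝ) : |surrogateLoss l ŷ| ≤ |l| := by
  unfold surrogateLoss
  split_ifs <;> simp

lemma surrogateLoss_nonpos_of_neg (l : ℝ) {ŷ : ℝ} (hŷ : ŷ < 0) :
    surrogateLoss l ŷ ≤ 0 := by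
  unfold surrogateLoss
  rw [max_eq_right hŷ.le, mul_zero]
  split_ifs with hl
  · nlinarith
  · rfl

lemma add_add_mul_pos_of_neg_le {V z k S H : ℝ} (hV : 0 ≤ V) (hk : 0 ≤ k) (hz : k * H < z)
    (hS : -H ≤ S) : 0 < V + z + k * S := by
  nlinarith [mul_le_mul_of_nonneg_left hS hk]

lemma neg_le_sub_surrogateLoss {ε α k z H l V S : ℝ} (hε : 0 < ε) (hα : 0 < α) (hk : 0 < k)
    (hz : k * H < z) (hl : |l| ≤ H) (hV : 0 ≤ V) (hS : -H ≤ S) :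
    -H ≤ S - surrogateLoss l (Dfun ε α k z V S) := by
  by_cases hS0 : S ≤ 0
  · have := surrogateLoss_nonpos_of_neg l
      (Dfun_neg hε hα hk (add_add_mul_pos_of_neg_le hV hk.le hz hS) hS0)
    linarith
  · have := (abs_le.mp ((abs_surrogateLoss_le l (Dfun ε α k z V S)).trans hl)).2
    linarith

lemma eq_neg_sum_Icc_of_sub {S L : ℕ → ℝ} (h0 : S 0 = 0)
    (hrec : ∀ t, 1 ≤ t → S t = S (t - 1) - L t) (n : ℕ) :
    S n = -∑ i ∈ Finset.Icc 1 n, L i := by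
  induction n with
  | zero => simp [h0]
  | succ n ih =>
    rw [hrec (n + 1) (Nat.le_add_left 1 n), Nat.add_sub_cancel, ih,
      Finset.sum_Icc_succ_top (Nat.le_add_left 1 n)]
    ring

lemma nonneg_of_add_sq {V L : ℕ → ℝ} (h0 : V 0 = 0)
    (hrec : ∀ t, 1 ≤ t → V t = V (t - 1) + L t ^ 2) (n : ℕ) : 0 ≤ V n := by
  induction n with
  | zero => exact h0.ge
  | succ n ih =>
    rw [hrec (n + 1) (Nat.le_add_left 1 n), Nat.add_sub_cancel]
    positivity

theorem meta_algorithm_well_posed_general (ε α : ℝ) (hε : 0 < ε) (hα : 0 < α)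
    (h k z : ℕ → ℝ)
    (hmono : ∀ t, 1 ≤ t → h t ≤ h (t + 1))
    (hk : ∀ t, 1 ≤ t → 0 < k t)
    (hz : ∀ t, 1 ≤ t → k t * h t < z t)
    (l : ℕ → ℝ) (hl : ∀ t, 1 ≤ t → |l t| ≤ h t)
    (Stil Vtil ytil y ltil : ℕ → ℝ)
    (hS0 : Stil 0 = 0) (hV0 : Vtil 0 = 0)
    (hytil : ∀ t, 1 ≤ t → ytil t = Dfun ε α (k t) (z t) (Vtil (t - 1)) (Stil (t - 1)))
    (hy : ∀ t, 1 ≤ t → y t = max (ytil t) 0)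
    (hltil : ∀ t, 1 ≤ t →
      ltil t = if l t * ytil t ≥ l t * y t then l t else 0)
    (hSrec : ∀ t, 1 ≤ t → Stil t = Stil (t - 1) - ltil t)
    (hVrec : ∀ t, 1 ≤ t → Vtil t = Vtil (t - 1) + (ltil t) ^ 2) :
    ∀ t, 1 ≤ t →
      (∑ i ∈ Finset.Icc 1 t, ltil i) ≤ h t ∧
      -h t ≤ Stil t ∧
      0 < Vtil (t - 1) + z t + k t * Stil (t - 1) := by
  have hV := nonneg_of_add_sq hV0 hVrec
  have hstep (n : ℕ) (hS : -h (n + 1) ≤ Stil n) : -h (n + 1) ≤ Stil (n + 1) := by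
    have hn : 1 ≤ n + 1 := Nat.le_add_left 1 n
    have hL : ltil (n + 1) = surrogateLoss (l (n + 1)) (ytil (n + 1)) := by
      rw [hltil _ hn, hy _ hn, surrogateLoss]
    rw [hSrec _ hn, hL, hytil _ hn, Nat.add_sub_cancel]
    exact neg_le_sub_surrogateLoss hε hα (hk _ hn) (hz _ hn) (hl _ hn) (hV n) hS
  have hinv (n : ℕ) : -h (n + 1) ≤ Stil n := by
    induction n with
    | zero => simpa [hS0] using (abs_nonneg _).trans (hl 1 le_rfl)
    | succ n ih => exact (neg_le_neg (hmono _ (Nat.le_add_left 1 n))).trans (hstep n ih)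
  intro t ht
  obtain ⟨n, rfl⟩ := Nat.exists_eq_add_of_le' ht
  refine ⟨?_, hstep n (hinv n), ?_⟩
  · linarith [hstep n (hinv n), eq_neg_sum_Icc_of_sub hS0 hSrec (n + 1)]
  · exact add_add_mul_pos_of_neg_le (hV n) (hk _ ht).le (hz _ ht) (hinv n)

/-- Well-posedness of the meta algorithm: the surrogate losses `l̃` satisfy
`∑_{i=1}^t l̃_i ≤ h_t` (i.e. `S̃_t ≥ −h_t`) for all `t ≥ 1`, and consequently the
first argument of `φ` in every prediction step is positive. -/
theorem meta_algorithm_well_posed (ε α : ℝ) (hε : 0 < ε) (hα : 0 < α)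
    (h k z : ℕ → ℝ)
    (hpos : ∀ t, 1 ≤ t → 0 < h t)
    (hmono : ∀ t, 1 ≤ t → h t ≤ h (t + 1))
    (hk : ∀ t, 1 ≤ t → 0 < k t)
    (hz : ∀ t, 1 ≤ t → k t * h t < z t)
    (l : ℕ → ℝ) (hl : ∀ t, 1 ≤ t → |l t| ≤ h t)
    (Stil Vtil ytil y ltil : ℕ → ℝ)
    (hS0 : Stil 0 = 0) (hV0 : Vtil 0 = 0)
    (hytil : ∀ t, 1 ≤ t → ytil t = Dfun ε α (k t) (z t) (Vtil (t - 1)) (Stil (t - 1)))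
    (hy : ∀ t, 1 ≤ t → y t = max (ytil t) 0)
    (hltil : ∀ t, 1 ≤ t →
      ltil t = if l t * ytil t ≥ l t * y t then l t else 0)
    (hSrec : ∀ t, 1 ≤ t → Stil t = Stil (t - 1) - ltil t)
    (hVrec : ∀ t, 1 ≤ t → Vtil t = Vtil (t - 1) + (ltil t) ^ 2) :
    ∀ t, 1 ≤ t →
      (∑ i ∈ Finset.Icc 1 t, ltil i) ≤ h t ∧
      -h t ≤ Stil t ∧
      0 < Vtil (t - 1) + z t + k t * Stil (t - 1) :=
  meta_algorithm_well_posed_general ε α hε hα h k z hmono hk hz l hl Stil Vtil ytil y ltil hS0 hV0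
    hytil hy hltil hSrec hVrec
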